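/- arXiv:2603.27427 — 4 statements merged into one kernel-verified Lean document; each statement's English description precedes it below -/
import Mathlib

section
/- (Matrix S-Lemma.) Let Π and Γ be real symmetric n×n matrices, and suppose there exists ζ₀ ∈ ℝⁿ with ζ₀ᵀ Γ ζ₀ > 0. Then the implication 'for all ζ ∈ ℝⁿ, ζᵀΓζ ≥ 0 implies ζᵀΠζ ≥ 0' holds if and only if there exists a real λ ≥ 0 such that Π − λΓ is positive semidefinite. -/
/-!
Write `P` and `G` for the two quadratic forms. The decisive fact is that whenever `G x < 0 < G y`,
`P x / G x ≤ P y / G y`; then any `λ ≥ 0` between the supremum of the ratios on `{G < 0}` and the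
infimum of those on `{G > 0}` works, and the point `ζ₀` keeps that supremum finite.

After rescaling, the inequality becomes `G x + G y = 0 → 0 ≤ P x + P y`. Rotating the pair
`(x, y)` to `(cos θ • x + sin θ • y, -sin θ • x + cos θ • y)` preserves both `G x + G y` and
`P x + P y`, and by the intermediate value theorem some `θ` makes the first rotated vector
`G`-isotropic, hence both of them; the hypothesis then applies to each.
-/

open Matrix

namespace QuadraticMap

variable {V : Type*} [AddCommGroup V] [Module ℝ V]

theorem map_smul_add_smul (Q : QuadraticForm ℝ V) (a b : ℝ) (x y : V) :
    Q (a • x + b • y) = a ^ 2 * Q x + a * b * polar Q x y + b ^ 2 * Q y := by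
  rw [QuadraticMap.map_add Q, QuadraticMap.map_smul, QuadraticMap.map_smul, polar_smul_left,
    polar_smul_right, smul_eq_mul, smul_eq_mul, smul_eq_mul, smul_eq_mul]
  ring

theorem map_rotate_add_map_rotate (Q : QuadraticForm ℝ V) (θ : ℝ) (x y : V) :
    Q (Real.cos θ • x + Real.sin θ • y) + Q ((-Real.sin θ) • x + Real.cos θ • y) = Q x + Q y := by
  rw [map_smul_add_smul, map_smul_add_smul]
  linear_combination (Q x + Q y) * Real.sin_sq_add_cos_sq θ

theorem exists_map_rotate_eq_zero (Q : QuadraticForm ℝ V) {x y : V} (hx : Q x ≤ 0)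
    (hy : 0 ≤ Q y) : ∃ θ, Q (Real.cos θ • x + Real.sin θ • y) = 0 := by
  have hcont : Continuous fun θ => Q (Real.cos θ • x + Real.sin θ • y) := by
    simp only [map_smul_add_smul]
    fun_prop
  have hmem : (0 : ℝ) ∈ Set.Icc (Q (Real.cos 0 • x + Real.sin 0 • y))
      (Q (Real.cos (Real.pi / 2) • x + Real.sin (Real.pi / 2) • y)) := by
    simpa using ⟨hx, hy⟩
  obtain ⟨θ, -, hθ⟩ := intermediate_value_Icc (by positivity) hcont.continuousOn hmem
  exact ⟨θ, hθ⟩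

variable {P G : QuadraticForm ℝ V}

theorem add_nonneg_of_add_eq_zero (hPG : ∀ v, G v = 0 → 0 ≤ P v) {x y : V} (hx : G x ≤ 0)
    (hxy : G x + G y = 0) : 0 ≤ P x + P y := by
  obtain ⟨θ, hz⟩ := exists_map_rotate_eq_zero G hx (by linarith)
  have hw : G ((-Real.sin θ) • x + Real.cos θ • y) = 0 := by
    linarith [map_rotate_add_map_rotate G θ x y]
  rw [← map_rotate_add_map_rotate P θ x y]
  exact add_nonneg (hPG _ hz) (hPG _ hw)

theorem div_le_div_of_neg_of_pos (hPG : ∀ v, G v = 0 → 0 ≤ P v) {x y : V} (hx : G x < 0)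
    (hy : 0 < G y) : P x / G x ≤ P y / G y := by
  set s := √(G y)
  set t := √(-G x)
  have hs : s * s = G y := Real.mul_self_sqrt hy.le
  have ht : t * t = -G x := Real.mul_self_sqrt (by linarith)
  have key := add_nonneg_of_add_eq_zero hPG (x := s • x) (y := t • y)
    (by rw [QuadraticMap.map_smul, hs, smul_eq_mul]; nlinarith)
    (by simp only [QuadraticMap.map_smul, hs, ht, smul_eq_mul]; ring)
  simp only [QuadraticMap.map_smul, hs, ht, smul_eq_mul] at key
  rw [div_le_iff_of_neg hx, div_mul_eq_mul_div, div_le_iff₀ hy]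
  linarith

theorem exists_nonneg_mul_le_of_nonneg_imp_nonneg (hG : ∃ v, 0 < G v)
    (hPG : ∀ v, 0 ≤ G v → 0 ≤ P v) : ∃ lam : ℝ, 0 ≤ lam ∧ ∀ v, lam * G v ≤ P v := by
  obtain ⟨v₀, hv₀⟩ := hG
  have hPG' : ∀ v, G v = 0 → 0 ≤ P v := fun v hv => hPG v hv.ge
  set T := (fun v => P v / G v) '' {v | G v < 0}
  have hT : ∀ y, 0 < G y → ∀ r ∈ T, r ≤ P y / G y := by
    rintro y hy _ ⟨x, hx, rfl⟩
    exact div_le_div_of_neg_of_pos hPG' hx hy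
  refine ⟨max 0 (sSup T), le_max_left _ _, fun v => ?_⟩
  rcases lt_trichotomy (G v) 0 with hv | hv | hv
  · refine (div_le_iff_of_neg hv).1 ((le_csSup ⟨_, hT v₀ hv₀⟩ ⟨v, hv, rfl⟩).trans ?_)
    exact le_max_right _ _
  · simpa [hv] using hPG v hv.ge
  · have hratio : 0 ≤ P v / G v := div_nonneg (hPG v hv.le) hv.le
    exact (le_div_iff₀ hv).1 (max_le hratio (Real.sSup_le (hT v hv) hratio))

theorem nonneg_imp_nonneg_iff_exists_mul_le (hG : ∃ v, 0 < G v) :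
    (∀ v, 0 ≤ G v → 0 ≤ P v) ↔ ∃ lam : ℝ, 0 ≤ lam ∧ ∀ v, lam * G v ≤ P v := by
  refine ⟨exists_nonneg_mul_le_of_nonneg_imp_nonneg hG, ?_⟩
  rintro ⟨lam, hlam, hle⟩ v hv
  exact (mul_nonneg hlam hv).trans (hle v)

end QuadraticMap

namespace Matrix

variable {ι : Type*} [Fintype ι]

theorem toQuadraticForm'_apply [DecidableEq ι] (A : Matrix ι ι ℝ) (x : ι → ℝ) :
    A.toQuadraticForm' x = x ⬝ᵥ A *ᵥ x := by
  simp [toQuadraticForm', toLinearMap₂'_apply']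

theorem posSemidef_sub_smul_iff {A B : Matrix ι ι ℝ} (hA : A.IsSymm) (hB : B.IsSymm) (c : ℝ) :
    (A - c • B).PosSemidef ↔ ∀ x, c * (x ⬝ᵥ B *ᵥ x) ≤ x ⬝ᵥ A *ᵥ x := by
  have hsymm : (A - c • B).IsSymm := hA.sub (hB.smul c)
  simp [posSemidef_iff_dotProduct_mulVec, hsymm, sub_mulVec, smul_mulVec, dotProduct_sub]

end Matrix

/-- Matrix S-Lemma: for real symmetric matrices `Pi` and `Gam` such that `ζ₀ᵀ Γ ζ₀ > 0`
for some `ζ₀`, the implication `ζᵀΓζ ≥ 0 → ζᵀΠζ ≥ 0` holds for all `ζ` iff there exists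
`λ ≥ 0` with `Π − λΓ ⪰ 0`. -/
theorem stmt_2 {n : ℕ} (Pi Gam : Matrix (Fin n) (Fin n) ℝ)
    (hPi : Pi.IsSymm) (hGam : Gam.IsSymm)
    (hstrict : ∃ ζ₀ : Fin n → ℝ, 0 < ζ₀ ⬝ᵥ Gam *ᵥ ζ₀) :
    (∀ ζ : Fin n → ℝ, 0 ≤ ζ ⬝ᵥ Gam *ᵥ ζ → 0 ≤ ζ ⬝ᵥ Pi *ᵥ ζ) ↔
      ∃ lam : ℝ, 0 ≤ lam ∧ (Pi - lam • Gam).PosSemidef := by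
  simp only [posSemidef_sub_smul_iff hPi hGam, ← toQuadraticForm'_apply] at hstrict ⊢
  exact QuadraticMap.nonneg_imp_nonneg_iff_exists_mul_le hstrict
end

section
/- Let A ∈ ℝ^{n×n}, B ∈ ℝ^{n×q}, C ∈ ℝ^{m×n}, D ∈ ℝ^{m×q}, let P ∈ ℝ^{n×n} be symmetric positive definite, and let X¹¹ ∈ ℝ^{q×q}, X²² ∈ ℝ^{m×m} be symmetric with X¹² ∈ ℝ^{q×m}, X²¹ = (X¹²)ᵀ. Suppose the block matrix [[−(PA + AᵀP) + CᵀX²²C, −PB + CᵀX²¹ + CᵀX²²D], [(−PB + CᵀX²¹ + CᵀX²²D)ᵀ, X¹¹ + X¹²D + DᵀX²¹ + DᵀX²²D]] is positive semidefinite. Then for every differentiable trajectory x : ℝ → ℝⁿ and continuous input u : ℝ → ℝ^q satisfying x′(t) = A x(t) + B u(t) for all t, the storage function V(t) = x(t)ᵀ P x(t) satisfies V′(t) ≤ u(t)ᵀX¹¹u(t) + 2u(t)ᵀX¹²y(t) + y(t)ᵀX²²y(t) for all t, where y(t) = C x(t) + D u(t). -/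
/-!
Along a trajectory, `V' = ẋᵀPx + xᵀPẋ` with `ẋ = Ax + Bu`. Expanding `y = Cx + Du`, the
quadratic form of the LMI matrix at the stacked vector `(x, u)` is exactly `s(u, y) - V'`, so
positive semidefiniteness of that matrix is the dissipation inequality `V' ≤ s(u, y)`.
-/

open Matrix

section Deriv

variable {𝕜 ι κ : Type*} [NontriviallyNormedField 𝕜] [Fintype ι]
  {f g : 𝕜 → ι → 𝕜} {f' g' : ι → 𝕜} {t : 𝕜}

theorem HasDerivAt.dotProduct (hf : HasDerivAt f f' t) (hg : HasDerivAt g g' t) :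
    HasDerivAt (fun s => f s ⬝ᵥ g s) (f' ⬝ᵥ g t + f t ⬝ᵥ g') t := by
  simp only [_root_.dotProduct, ← Finset.sum_add_distrib]
  exact HasDerivAt.fun_sum fun i _ => (hasDerivAt_pi.mp hf i).mul (hasDerivAt_pi.mp hg i)

theorem HasDerivAt.mulVec (M : Matrix κ ι 𝕜) (hf : HasDerivAt f f' t) :
    HasDerivAt (fun s => M *ᵥ f s) (M *ᵥ f') t :=
  hasDerivAt_pi.mpr fun i =>
    (hasDerivAt_const t (M i)).dotProduct hf |>.congr_deriv
      (by rw [zero_dotProduct, zero_add]; rfl)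

end Deriv

section Algebra

variable {R l n q m : Type*} [CommRing R] [Fintype l] [Fintype n] [Fintype q] [Fintype m]

theorem Matrix.IsSymm.dotProduct_mulVec_comm {M : Matrix n n R} (hM : M.IsSymm) (a b : n → R) :
    a ⬝ᵥ M *ᵥ b = b ⬝ᵥ M *ᵥ a := by
  rw [← dotProduct_transpose_mulVec, hM.eq]

theorem sumElim_dotProduct_fromBlocks_mulVec (M : Matrix l l R) (N : Matrix l n R)
    (K : Matrix n n R) (v : l → R) (w : n → R) :
    Sum.elim v w ⬝ᵥ fromBlocks M N Nᵀ K *ᵥ Sum.elim v w =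
      v ⬝ᵥ M *ᵥ v + 2 * (v ⬝ᵥ N *ᵥ w) + w ⬝ᵥ K *ᵥ w := by
  simp only [fromBlocks_mulVec, sumElim_dotProduct_sumElim, Sum.elim_comp_inl, Sum.elim_comp_inr,
    dotProduct_add, dotProduct_transpose_mulVec]
  ring

def supplyRate (X11 : Matrix q q R) (X12 : Matrix q m R) (X22 : Matrix m m R)
    (u : q → R) (y : m → R) : R :=
  u ⬝ᵥ X11 *ᵥ u + 2 * (u ⬝ᵥ X12 *ᵥ y) + y ⬝ᵥ X22 *ᵥ y

theorem lmi_quadForm_eq_supplyRate_sub_storageRate (A : Matrix n n R) (B : Matrix n q R)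
    (C : Matrix m n R) (D : Matrix m q R) {P : Matrix n n R} (X11 : Matrix q q R)
    (X12 : Matrix q m R) {X22 : Matrix m m R} (hP : P.IsSymm) (hX22 : X22.IsSymm)
    (v : n → R) (w : q → R) :
    v ⬝ᵥ (-(P * A + Aᵀ * P) + Cᵀ * X22 * C) *ᵥ v
        + 2 * (v ⬝ᵥ (-(P * B) + Cᵀ * X12ᵀ + Cᵀ * X22 * D) *ᵥ w)
        + w ⬝ᵥ (X11 + X12 * D + Dᵀ * X12ᵀ + Dᵀ * X22 * D) *ᵥ w =
      supplyRate X11 X12 X22 w (C *ᵥ v + D *ᵥ w)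
        - ((A *ᵥ v + B *ᵥ w) ⬝ᵥ P *ᵥ v + v ⬝ᵥ P *ᵥ (A *ᵥ v + B *ᵥ w)) := by
  simp only [supplyRate, add_mulVec, neg_mulVec, ← mulVec_mulVec, mulVec_add, dotProduct_add,
    dotProduct_neg, dotProduct_transpose_mulVec, dotProduct_comm, hP.dotProduct_mulVec_comm,
    hX22.dotProduct_mulVec_comm]
  ring

end Algebra

theorem stmt_5_general {n q m : ℕ}
    (A : Matrix (Fin n) (Fin n) ℝ) (B : Matrix (Fin n) (Fin q) ℝ)
    (C : Matrix (Fin m) (Fin n) ℝ) (D : Matrix (Fin m) (Fin q) ℝ)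
    (P : Matrix (Fin n) (Fin n) ℝ) (hP : P.PosDef)
    (X11 : Matrix (Fin q) (Fin q) ℝ) (X22 : Matrix (Fin m) (Fin m) ℝ)
    (X12 : Matrix (Fin q) (Fin m) ℝ) (X21 : Matrix (Fin m) (Fin q) ℝ)
    (hX22 : X22.IsSymm) (hX21 : X21 = X12ᵀ)
    (hLMI : (Matrix.fromBlocks
        (-(P * A + Aᵀ * P) + Cᵀ * X22 * C)
        (-(P * B) + Cᵀ * X21 + Cᵀ * X22 * D)
        (-(P * B) + Cᵀ * X21 + Cᵀ * X22 * D)ᵀ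
        (X11 + X12 * D + Dᵀ * X21 + Dᵀ * X22 * D)).PosSemidef)
    (x : ℝ → Fin n → ℝ) (u : ℝ → Fin q → ℝ)
    (hx : ∀ t : ℝ, HasDerivAt x (A *ᵥ x t + B *ᵥ u t) t) :
    ∀ t : ℝ,
      deriv (fun s => x s ⬝ᵥ P *ᵥ x s) t ≤
        u t ⬝ᵥ X11 *ᵥ u t + 2 * (u t ⬝ᵥ X12 *ᵥ (C *ᵥ x t + D *ᵥ u t)) +
          (C *ᵥ x t + D *ᵥ u t) ⬝ᵥ X22 *ᵥ (C *ᵥ x t + D *ᵥ u t) := by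
  intro t
  subst hX21
  have hPsymm : P.IsSymm := isHermitian_iff_isSymm.mp hP.isHermitian
  have hQ := (posSemidef_iff_dotProduct_mulVec.mp hLMI).2 (Sum.elim (x t) (u t))
  rw [star_trivial, sumElim_dotProduct_fromBlocks_mulVec,
    lmi_quadForm_eq_supplyRate_sub_storageRate A B C D X11 X12 hPsymm hX22, supplyRate] at hQ
  rw [((hx t).dotProduct ((hx t).mulVec P)).deriv]
  linarith

/-- If the dissipativity LMI holds, then along every differentiable trajectory of the LTI
system `ẋ = Ax + Bu` (with continuous input `u`), the storage function `V(t) = x(t)ᵀPx(t)`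
satisfies `V′(t) ≤ u(t)ᵀX¹¹u(t) + 2u(t)ᵀX¹²y(t) + y(t)ᵀX²²y(t)` with `y = Cx + Du`. -/
theorem stmt_5 {n q m : ℕ}
    (A : Matrix (Fin n) (Fin n) ℝ) (B : Matrix (Fin n) (Fin q) ℝ)
    (C : Matrix (Fin m) (Fin n) ℝ) (D : Matrix (Fin m) (Fin q) ℝ)
    (P : Matrix (Fin n) (Fin n) ℝ) (hP : P.PosDef)
    (X11 : Matrix (Fin q) (Fin q) ℝ) (X22 : Matrix (Fin m) (Fin m) ℝ)
    (X12 : Matrix (Fin q) (Fin m) ℝ) (X21 : Matrix (Fin m) (Fin q) ℝ)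
    (hX11 : X11.IsSymm) (hX22 : X22.IsSymm) (hX21 : X21 = X12ᵀ)
    (hLMI : (Matrix.fromBlocks
        (-(P * A + Aᵀ * P) + Cᵀ * X22 * C)
        (-(P * B) + Cᵀ * X21 + Cᵀ * X22 * D)
        (-(P * B) + Cᵀ * X21 + Cᵀ * X22 * D)ᵀ
        (X11 + X12 * D + Dᵀ * X21 + Dᵀ * X22 * D)).PosSemidef)
    (x : ℝ → Fin n → ℝ) (u : ℝ → Fin q → ℝ)
    (hu : Continuous u)
    (hx : ∀ t : ℝ, HasDerivAt x (A *ᵥ x t + B *ᵥ u t) t) :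
    ∀ t : ℝ,
      deriv (fun s => x s ⬝ᵥ P *ᵥ x s) t ≤
        u t ⬝ᵥ X11 *ᵥ u t + 2 * (u t ⬝ᵥ X12 *ᵥ (C *ᵥ x t + D *ᵥ u t)) +
          (C *ᵥ x t + D *ᵥ u t) ⬝ᵥ X22 *ᵥ (C *ᵥ x t + D *ᵥ u t) :=
  stmt_5_general A B C D P hP X11 X22 X12 X21 hX22 hX21 hLMI x u hx
end

section
/- (Line dissipativity LMI: maximality of the passivity indices.) Let R_l > 0 and L_l > 0, and suppose P̄ > 0, ν̄, ρ̄ ∈ ℝ are such that the 2×2 symmetric matrix W(P̄, ν̄, ρ̄) = [[2P̄R_l/L_l − ρ̄, −P̄/L_l + 1/2], [−P̄/L_l + 1/2, −ν̄]] is positive semidefinite. Then ν̄ ≤ 0; moreover, if ν̄ = 0, then necessarily P̄ = L_l/2 and ρ̄ ≤ R_l. Hence the maximum feasible values are ν̄ = 0 and ρ̄ = R_l, attained at P̄ = L_l/2. -/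
open Matrix

/-! A positive semidefinite `2 × 2` matrix has nonnegative diagonal and nonnegative determinant.
The corner `-ν̄ ≥ 0` gives `ν̄ ≤ 0`; when `ν̄ = 0` the determinant condition `b² ≤ 0` kills the
off-diagonal entry, which pins `P̄ = L_l / 2`, and the other diagonal entry then reads `R_l - ρ̄ ≥ 0`. -/

theorem Matrix.PosSemidef.fin_two_nonneg_and_sq_le {a b d : ℝ}
    (h : (!![a, b; b, d] : Matrix (Fin 2) (Fin 2) ℝ).PosSemidef) :
    0 ≤ a ∧ 0 ≤ d ∧ b ^ 2 ≤ a * d := by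
  have hdet := h.det_nonneg
  rw [det_fin_two_of] at hdet
  exact ⟨by simpa using h.diag_nonneg (i := 0), by simpa using h.diag_nonneg (i := 1),
    by linarith [sq b]⟩

theorem stmt_10_general (Rl Ll : ℝ) (hLl : 0 < Ll)
    (Pbar nubar rhobar : ℝ)
    (hW : (!![2 * Pbar * Rl / Ll - rhobar, -(Pbar / Ll) + 1 / 2;
              -(Pbar / Ll) + 1 / 2, -nubar] : Matrix (Fin 2) (Fin 2) ℝ).PosSemidef) :
    nubar ≤ 0 ∧ (nubar = 0 → Pbar = Ll / 2 ∧ rhobar ≤ Rl) := by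
  obtain ⟨hdiag₀, hdiag₁, hoff⟩ := hW.fin_two_nonneg_and_sq_le
  refine ⟨by linarith, fun hnu => ?_⟩
  subst hnu
  have hoff_eq : -(Pbar / Ll) + 1 / 2 = 0 := by
    simpa using hoff
  have hP : Pbar = Ll / 2 := by
    field_simp at hoff_eq
    linarith
  refine ⟨hP, ?_⟩
  rw [hP] at hdiag₀
  field_simp at hdiag₀
  linarith

/-- Line dissipativity LMI, maximality of the passivity indices: if `P̄ > 0` and
`W(P̄, ν̄, ρ̄) ⪰ 0`, then `ν̄ ≤ 0`; and if `ν̄ = 0`, then `P̄ = L_l/2` and `ρ̄ ≤ R_l`. -/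
theorem stmt_10 (Rl Ll : ℝ) (hRl : 0 < Rl) (hLl : 0 < Ll)
    (Pbar nubar rhobar : ℝ) (hPbar : 0 < Pbar)
    (hW : (!![2 * Pbar * Rl / Ll - rhobar, -(Pbar / Ll) + 1 / 2;
              -(Pbar / Ll) + 1 / 2, -nubar] : Matrix (Fin 2) (Fin 2) ℝ).PosSemidef) :
    nubar ≤ 0 ∧ (nubar = 0 → Pbar = Ll / 2 ∧ rhobar ≤ Rl) :=
  stmt_10_general Rl Ll hLl Pbar nubar rhobar hW
end

section
/- (CPL sector-bounded quadratic constraint.) Let P_L > 0, C > 0, and 0 < V_min ≤ V_r ≤ V_max, and let g(ṽ) = (P_L/C)(1/V_r − 1/(ṽ + V_r)) with α = P_L/(C·V_max²) and β = P_L/(C·V_min²). Then for every real ṽ with V_min − V_r ≤ ṽ ≤ V_max − V_r and ṽ ≠ 0, the quadratic constraint −αβ·ṽ² + (α + β)·ṽ·g(ṽ) − g(ṽ)² ≥ 0 holds; equivalently, [ṽ; g(ṽ)]ᵀ [[−αβ, (α+β)/2], [(α+β)/2, −1]] [ṽ; g(ṽ)] ≥ 0. -/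
/-!
Writing `w = V_r (ṽ + V_r)`, the CPL nonlinearity is linear with a state-dependent gain,
`g(ṽ) = (P_L / C) / w · ṽ`, and the voltage limits pin `w` between `V_min²` and `V_max²`,
so the gain lies between `α` and `β`. The quadratic form factors as `(g - αṽ)(βṽ - g)`,
which is then `ṽ²` times a product of two numbers of equal sign.
-/

open Matrix

theorem sectorForm_eq_mul (a b v y : ℝ) :
    -(a * b) * v ^ 2 + (a + b) * v * y - y ^ 2 = (y - a * v) * (b * v - y) := by
  ring

theorem sectorForm_nonneg_of_gain {a b c : ℝ} (hc : 0 ≤ (c - a) * (b - c)) (v : ℝ) :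
    0 ≤ -(a * b) * v ^ 2 + (a + b) * v * (c * v) - (c * v) ^ 2 := by
  rw [sectorForm_eq_mul, show (c * v - a * v) * (b * v - c * v) = v ^ 2 * ((c - a) * (b - c)) by
    ring]
  exact mul_nonneg (sq_nonneg v) hc

/-- The gain `k / w` stays in the sector spanned by `k / M` and `k / m`, whatever the sign
of `k`. -/
theorem div_mem_sector (k : ℝ) {m w M : ℝ} (hm : 0 < m) (hmw : m ≤ w) (hwM : w ≤ M) :
    0 ≤ (k / w - k / M) * (k / m - k / w) := by
  have hw : 0 < w := hm.trans_le hmw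
  rw [show (k / w - k / M) * (k / m - k / w) = k ^ 2 * ((1 / w - 1 / M) * (1 / m - 1 / w)) by
    ring]
  refine mul_nonneg (sq_nonneg k) (mul_nonneg ?_ ?_)
  · exact sub_nonneg.2 (one_div_le_one_div_of_le hw hwM)
  · exact sub_nonneg.2 (one_div_le_one_div_of_le hm hmw)

theorem mul_sub_one_div_eq_div_mul (k V v : ℝ) (hV : V ≠ 0) (hvV : v + V ≠ 0) :
    k * (1 / V - 1 / (v + V)) = k / (V * (v + V)) * v := by
  field_simp
  ring

theorem dotProduct_mulVec_fin_two (p q r s x y : ℝ) :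
    ![x, y] ⬝ᵥ (!![p, q; r, s] *ᵥ ![x, y]) = p * x ^ 2 + (q + r) * x * y + s * y ^ 2 := by
  simp only [dotProduct, mulVec, Fin.sum_univ_two, cons_val_zero, cons_val_one, of_apply,
    cons_val', empty_val', cons_val_fin_one]
  ring

theorem stmt_12_general (P_L C V_min V_max V_r : ℝ)
    (hVmin : 0 < V_min)
    (h1 : V_min ≤ V_r) (h2 : V_r ≤ V_max) :
    let g : ℝ → ℝ := fun v => (P_L / C) * (1 / V_r - 1 / (v + V_r))
    let α : ℝ := P_L / (C * V_max ^ 2)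
    let β : ℝ := P_L / (C * V_min ^ 2)
    ∀ v : ℝ, V_min - V_r ≤ v → v ≤ V_max - V_r → v ≠ 0 →
      (-(α * β) * v ^ 2 + (α + β) * v * g v - (g v) ^ 2 ≥ 0) ∧
      (0 ≤ ![v, g v] ⬝ᵥ
        (!![-(α * β), (α + β) / 2; (α + β) / 2, -1] : Matrix (Fin 2) (Fin 2) ℝ) *ᵥ
          ![v, g v]) := by
  intro g α β v hl hr _
  have hVr : 0 < V_r := hVmin.trans_le h1
  have hw_lower : V_min ^ 2 ≤ V_r * (v + V_r) := by
    rw [sq]; exact mul_le_mul h1 (by linarith) hVmin.le hVr.le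
  have hw_upper : V_r * (v + V_r) ≤ V_max ^ 2 := by
    rw [sq]; exact mul_le_mul h2 (by linarith) (by linarith) (hVr.le.trans h2)
  have hg : g v = P_L / C / (V_r * (v + V_r)) * v :=
    mul_sub_one_div_eq_div_mul _ _ _ hVr.ne' (by linarith)
  have hα : α = P_L / C / V_max ^ 2 := (div_div _ _ _).symm
  have hβ : β = P_L / C / V_min ^ 2 := (div_div _ _ _).symm
  have hform : 0 ≤ -(α * β) * v ^ 2 + (α + β) * v * g v - g v ^ 2 := by
    rw [hg, hα, hβ]
    exact sectorForm_nonneg_of_gain (div_mem_sector _ (by positivity) hw_lower hw_upper) v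
  refine ⟨hform, ?_⟩
  rw [dotProduct_mulVec_fin_two]
  linarith

/-- CPL sector-bounded quadratic constraint: for all nonzero
`ṽ ∈ [V_min − V_r, V_max − V_r]`, `−αβ·ṽ² + (α+β)·ṽ·g(ṽ) − g(ṽ)² ≥ 0`; equivalently
`[ṽ; g(ṽ)]ᵀ [[−αβ, (α+β)/2], [(α+β)/2, −1]] [ṽ; g(ṽ)] ≥ 0`. -/
theorem stmt_12 (P_L C V_min V_max V_r : ℝ)
    (hPL : 0 < P_L) (hC : 0 < C) (hVmin : 0 < V_min)
    (h1 : V_min ≤ V_r) (h2 : V_r ≤ V_max) :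
    let g : ℝ → ℝ := fun v => (P_L / C) * (1 / V_r - 1 / (v + V_r))
    let α : ℝ := P_L / (C * V_max ^ 2)
    let β : ℝ := P_L / (C * V_min ^ 2)
    ∀ v : ℝ, V_min - V_r ≤ v → v ≤ V_max - V_r → v ≠ 0 →
      (-(α * β) * v ^ 2 + (α + β) * v * g v - (g v) ^ 2 ≥ 0) ∧
      (0 ≤ ![v, g v] ⬝ᵥ
        (!![-(α * β), (α + β) / 2; (α + β) / 2, -1] : Matrix (Fin 2) (Fin 2) ℝ) *ᵥ
          ![v, g v]) :=
  stmt_12_general P_L C V_min V_max V_r hVmin h1 h2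
end
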